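/- arXiv:2106.11577 — 2 statements merged into one kernel-verified Lean document; each statement's English description precedes it below -/
import Mathlib

section
/- Let (Z_t)_{t≥0} be a supermartingale adapted to a filtration (F_t)_{t≥0} with Z_0 = 0 and F_0 trivial. Suppose there exists c > 0 such that for every t ≥ 0 the event {|Z_{t+1} − Z_t| > c} is contained in {Y_t > 0}, where each Y_t is F_t-measurable. Then for all z > 0 and t ≥ 1, P[Z_t ≥ z] ≤ exp(−z^2/(2tc^2)) + Σ_{j=0}^{t−1} P[Y_j > 0]. -/
open MeasureTheory

lemma aux_exp_le {c x l : ℝ} (hc : 0 < c) (hx : |x| ≤ c) :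
    Real.exp (l * x) ≤ Real.cosh (l * c) + (x / c) * Real.sinh (l * c) := by
  obtain ⟨hx1, hx2⟩ := abs_le.mp hx
  set θ : ℝ := (c - x) / (2 * c) with hθdef
  have hθ0 : 0 ≤ θ := by
    apply div_nonneg (by linarith) (by linarith)
  have hθ1 : 0 ≤ 1 - θ := by
    rw [hθdef]; rw [sub_nonneg, div_le_one (by linarith)]; linarith
  have hconv := convexOn_exp.2 (Set.mem_univ (-(l * c))) (Set.mem_univ (l * c))
      hθ0 hθ1 (by ring)
  simp only [smul_eq_mul] at hconv
  have harg : θ * -(l * c) + (1 - θ) * (l * c) = l * x := by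
    rw [hθdef]; field_simp [hc.ne']; ring
  rw [harg] at hconv
  refine hconv.trans_eq ?_
  rw [Real.cosh_eq, Real.sinh_eq, Real.exp_neg, hθdef]
  field_simp [hc.ne']
  ring

lemma aux_integral_nonpos {Ω : Type*} {m0 : MeasurableSpace Ω} (μ : Measure Ω)
    [IsProbabilityMeasure μ] (ℱ : Filtration ℕ m0) {Z : ℕ → Ω → ℝ}
    (hZ : Supermartingale Z ℱ μ) (n : ℕ) {f : Ω → ℝ}
    (hf : StronglyMeasurable[ℱ n] f) (hf0 : ∀ ω, 0 ≤ f ω) {b : ℝ} (hfb : ∀ ω, f ω ≤ b) :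
    ∫ ω, f ω * (Z (n + 1) ω - Z n ω) ∂μ ≤ 0 := by
  set g : Ω → ℝ := fun ω => Z (n + 1) ω - Z n ω with hg
  have hgint : Integrable g μ := (hZ.integrable (n + 1)).sub (hZ.integrable n)
  have hbound : ∀ᵐ ω ∂μ, ‖f ω‖ ≤ b := ae_of_all _ fun ω => by
    rw [Real.norm_eq_abs, abs_of_nonneg (hf0 ω)]; exact hfb ω
  have hpull : μ[f * g|ℱ n] =ᵐ[μ] f * μ[g|ℱ n] :=
    condExp_stronglyMeasurable_mul_of_bound (ℱ.le n) hf hgint b hbound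
  have hcond : μ[g|ℱ n] ≤ᵐ[μ] 0 := by
    have h1 : μ[g|ℱ n] =ᵐ[μ] μ[Z (n + 1)|ℱ n] - μ[Z n|ℱ n] :=
      condExp_sub (hZ.integrable (n + 1)) (hZ.integrable n) _
    have h2 : μ[Z n|ℱ n] =ᵐ[μ] Z n := by
      rw [condExp_of_stronglyMeasurable (ℱ.le n) (hZ.stronglyMeasurable n) (hZ.integrable n)]
    have h3 : μ[Z (n + 1)|ℱ n] ≤ᵐ[μ] Z n := hZ.condExp_ae_le (Nat.le_succ n)
    filter_upwards [h1, h2, h3] with ω e1 e2 e3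
    simp only [Pi.sub_apply, Pi.zero_apply] at *
    rw [e1, e2]; linarith
  have hfgint : Integrable (f * g) μ :=
    hgint.bdd_mul (hf.mono (ℱ.le n)).aestronglyMeasurable hbound
  calc ∫ ω, f ω * g ω ∂μ = ∫ ω, (μ[f * g|ℱ n]) ω ∂μ := (integral_condExp (ℱ.le n)).symm
    _ = ∫ ω, (f * μ[g|ℱ n]) ω ∂μ := integral_congr_ae hpull
    _ ≤ 0 := by
        apply integral_nonpos_of_ae
        filter_upwards [hcond] with ω hω
        simp only [Pi.mul_apply, Pi.zero_apply] at *
        exact mul_nonpos_of_nonneg_of_nonpos (hf0 ω) hω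

theorem stmt_12 {Ω : Type*} {m0 : MeasurableSpace Ω} (μ : Measure Ω) [IsProbabilityMeasure μ]
    (ℱ : Filtration ℕ m0) (Z Y : ℕ → Ω → ℝ) (c : ℝ) (hc : 0 < c)
    (hZ : Supermartingale Z ℱ μ) (hZ0 : ∀ ω, Z 0 ω = 0)
    (hY_meas : ∀ t, StronglyMeasurable[ℱ t] (Y t))
    (hincl : ∀ t : ℕ, {ω | c < |Z (t + 1) ω - Z t ω|} ⊆ {ω | 0 < Y t ω}) :
    ∀ (z : ℝ) (t : ℕ), 0 < z → 1 ≤ t →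
      (μ {ω | z ≤ Z t ω}).toReal ≤
        Real.exp (-z^2 / (2 * t * c^2)) + ∑ j ∈ Finset.range t, (μ {ω | 0 < Y j ω}).toReal := by
  intro z t hz ht
  -- The "good" sets and stopped increments
  set G : ℕ → Set Ω := fun n => {ω | ∀ j ≤ n, Y j ω ≤ 0} with hG
  have hGmeas : ∀ n, MeasurableSet[ℱ n] (G n) := by
    intro n
    have : G n = ⋂ j, ⋂ (_ : j ≤ n), {ω | Y j ω ≤ 0} := by
      ext ω; simp [hG]
    rw [this]
    refine MeasurableSet.iInter fun j => MeasurableSet.iInter fun hj => ?_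
    exact (ℱ.mono hj) _ (((hY_meas j).measurable) measurableSet_Iic)
  set D : ℕ → Ω → ℝ := fun n => (G n).indicator (fun ω => Z (n + 1) ω - Z n ω) with hD
  have hDbound : ∀ n ω, |D n ω| ≤ c := by
    intro n ω
    by_cases hω : ω ∈ G n
    · rw [hD]; simp only [Set.indicator_of_mem hω]
      by_contra hcon
      push_neg at hcon
      have : ω ∈ {ω | 0 < Y n ω} := hincl n hcon
      exact absurd (hω n le_rfl) (not_le.mpr this)
    · rw [hD]; simp [Set.indicator_of_notMem hω, hc.le]
  have hDmeas : ∀ n, StronglyMeasurable[ℱ (n + 1)] (D n) := by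
    intro n
    exact StronglyMeasurable.indicator
      ((hZ.stronglyMeasurable (n + 1)).sub ((hZ.stronglyMeasurable n).mono (ℱ.mono n.le_succ)))
      ((ℱ.mono n.le_succ) _ (hGmeas n))
  set W : ℕ → Ω → ℝ := fun n ω => ∑ j ∈ Finset.range n, D j ω with hW
  have hWmeas : ∀ n, StronglyMeasurable[ℱ n] (W n) := by
    intro n
    apply Finset.stronglyMeasurable_fun_sum
    intro j hj
    exact (hDmeas j).mono (ℱ.mono (Finset.mem_range.mp hj))
  have hWbound : ∀ n ω, |W n ω| ≤ n * c := by
    intro n ω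
    calc |W n ω| ≤ ∑ j ∈ Finset.range n, |D j ω| := Finset.abs_sum_le_sum_abs _ _
      _ ≤ ∑ _j ∈ Finset.range n, c := Finset.sum_le_sum fun j _ => hDbound j ω
      _ = n * c := by simp [mul_comm]
  set l : ℝ := z / (t * c ^ 2) with hl
  have hl0 : 0 < l := by
    apply div_pos hz
    positivity
  -- integrability of exp(l * W n)
  have hexpint : ∀ n, Integrable (fun ω => Real.exp (l * W n ω)) μ := by
    intro n
    refine ⟨(Real.continuous_exp.comp_stronglyMeasurable (((hWmeas n).mono (ℱ.le n)).const_mul l)).aestronglyMeasurable, ?_⟩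
    apply HasFiniteIntegral.of_bounded (C := Real.exp (l * (n * c)))
    apply ae_of_all
    intro ω
    rw [Real.norm_eq_abs, abs_of_pos (Real.exp_pos _)]
    apply Real.exp_le_exp.mpr
    apply mul_le_mul_of_nonneg_left _ hl0.le
    exact (abs_le.mp (hWbound n ω)).2
  have hbd_int : ∀ (f : Ω → ℝ), StronglyMeasurable f → ∀ (C : ℝ), (∀ ω, |f ω| ≤ C) →
      Integrable f μ := by
    intro f hf C hC
    exact ⟨hf.aestronglyMeasurable, HasFiniteIntegral.of_bounded
      (ae_of_all _ fun ω => by rw [Real.norm_eq_abs]; exact hC ω)⟩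
  -- key exponential moment bound
  have hE : ∀ n : ℕ, ∫ ω, Real.exp (l * W n ω) ∂μ ≤ Real.exp (n * ((l * c) ^ 2 / 2)) := by
    intro n
    induction n with
    | zero => simp [hW]
    | succ n ih =>
      have hEnonneg : 0 ≤ ∫ ω, Real.exp (l * W n ω) ∂μ :=
        integral_nonneg fun ω => (Real.exp_pos _).le
      -- the supermartingale increment integral is nonpositive
      have key : ∫ ω, Real.exp (l * W n ω) * D n ω ∂μ ≤ 0 := by
        set f : Ω → ℝ := fun ω => Real.exp (l * W n ω) * Set.indicator (G n) (fun _ => (1:ℝ)) ω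
          with hf
        have hfmeas : StronglyMeasurable[ℱ n] f :=
          (Real.continuous_exp.comp_stronglyMeasurable ((hWmeas n).const_mul l)).mul
            (stronglyMeasurable_const.indicator (hGmeas n))
        have hf0 : ∀ ω, 0 ≤ f ω := by
          intro ω
          apply mul_nonneg (Real.exp_pos _).le
          by_cases h : ω ∈ G n <;> simp [h]
        have hfb : ∀ ω, f ω ≤ Real.exp (l * (n * c)) := by
          intro ω
          have h1 : Real.exp (l * W n ω) ≤ Real.exp (l * (n * c)) :=
            Real.exp_le_exp.mpr (mul_le_mul_of_nonneg_left
              ((le_abs_self _).trans (hWbound n ω)) hl0.le)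
          have h2 : Set.indicator (G n) (fun _ => (1:ℝ)) ω ≤ 1 := by
            by_cases h : ω ∈ G n <;> simp [h]
          calc f ω ≤ Real.exp (l * W n ω) * 1 :=
                mul_le_mul_of_nonneg_left h2 (Real.exp_pos _).le
            _ ≤ Real.exp (l * (n * c)) := by rw [mul_one]; exact h1
        have := aux_integral_nonpos μ ℱ hZ n hfmeas hf0 hfb
        have heq : ∀ ω, f ω * (Z (n + 1) ω - Z n ω) = Real.exp (l * W n ω) * D n ω := by
          intro ω
          rw [hf, hD]
          by_cases h : ω ∈ G n <;> simp [h]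
        rw [show (fun ω => f ω * (Z (n + 1) ω - Z n ω))
            = fun ω => Real.exp (l * W n ω) * D n ω from funext heq] at this
        exact this
      -- integrability facts
      have hint1 : Integrable (fun ω => Real.exp (l * W n ω) * D n ω) μ := by
        refine hbd_int _ ?_ (Real.exp (l * (n * c)) * c) ?_
        · exact (Real.continuous_exp.comp_stronglyMeasurable
            (((hWmeas n).mono (ℱ.le n)).const_mul l)).mul ((hDmeas n).mono (ℱ.le (n+1)))
        · intro ω
          rw [abs_mul, abs_of_pos (Real.exp_pos _)]
          apply mul_le_mul _ (hDbound n ω) (abs_nonneg _) (Real.exp_pos _).le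
          exact Real.exp_le_exp.mpr (mul_le_mul_of_nonneg_left
            ((le_abs_self _).trans (hWbound n ω)) hl0.le)
      have hsinh : 0 ≤ Real.sinh (l * c) := by rw [← Real.sinh_zero]; exact Real.sinh_le_sinh.mpr (by positivity)
      -- pointwise inequality and integration
      have hpw : ∀ ω, Real.exp (l * W (n + 1) ω) ≤
          Real.exp (l * W n ω) * Real.cosh (l * c)
          + (Real.sinh (l * c) / c) * (Real.exp (l * W n ω) * D n ω) := by
        intro ω
        have hWsucc : W (n + 1) ω = W n ω + D n ω := Finset.sum_range_succ _ n
        have h1 : Real.exp (l * W (n + 1) ω)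
            = Real.exp (l * W n ω) * Real.exp (l * D n ω) := by
          rw [hWsucc, mul_add, Real.exp_add]
        rw [h1]
        have h2 := aux_exp_le hc (hDbound n ω) (l := l)
        calc Real.exp (l * W n ω) * Real.exp (l * D n ω)
            ≤ Real.exp (l * W n ω) *
              (Real.cosh (l * c) + (D n ω / c) * Real.sinh (l * c)) :=
              mul_le_mul_of_nonneg_left h2 (Real.exp_pos _).le
          _ = Real.exp (l * W n ω) * Real.cosh (l * c)
              + (Real.sinh (l * c) / c) * (Real.exp (l * W n ω) * D n ω) := by
              field_simp
      have hint2 : Integrable (fun ω => Real.exp (l * W n ω) * Real.cosh (l * c)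
          + (Real.sinh (l * c) / c) * (Real.exp (l * W n ω) * D n ω)) μ :=
        ((hexpint n).mul_const _).add (hint1.const_mul _)
      calc ∫ ω, Real.exp (l * W (n + 1) ω) ∂μ
          ≤ ∫ ω, (Real.exp (l * W n ω) * Real.cosh (l * c)
            + (Real.sinh (l * c) / c) * (Real.exp (l * W n ω) * D n ω)) ∂μ :=
            integral_mono (hexpint (n + 1)) hint2 hpw
        _ = (∫ ω, Real.exp (l * W n ω) ∂μ) * Real.cosh (l * c)
            + (Real.sinh (l * c) / c) * ∫ ω, Real.exp (l * W n ω) * D n ω ∂μ := by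
            rw [integral_add ((hexpint n).mul_const _) (hint1.const_mul _),
              integral_mul_const, integral_const_mul]
        _ ≤ (∫ ω, Real.exp (l * W n ω) ∂μ) * Real.cosh (l * c) := by
            nlinarith [mul_nonpos_of_nonneg_of_nonpos (div_nonneg hsinh hc.le) key]
        _ ≤ Real.exp (n * ((l * c) ^ 2 / 2)) * Real.exp ((l * c) ^ 2 / 2) := by
            apply mul_le_mul ih (Real.cosh_le_exp_half_sq _) (Real.cosh_pos _).le
              (Real.exp_pos _).le
        _ = Real.exp ((n + 1 : ℕ) * ((l * c) ^ 2 / 2)) := by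
            rw [← Real.exp_add]
            congr 1
            push_cast
            ring
  -- Markov / Chernoff step
  have hmarkov : (μ {ω | z ≤ W t ω}).toReal ≤ Real.exp (-z ^ 2 / (2 * t * c ^ 2)) := by
    have hset : {ω | z ≤ W t ω} = {ω | Real.exp (l * z) ≤ Real.exp (l * W t ω)} := by
      ext ω
      simp only [Set.mem_setOf_eq, Real.exp_le_exp]
      exact (mul_le_mul_iff_right₀ hl0).symm
    have h1 := mul_meas_ge_le_integral_of_nonneg
      (ae_of_all μ fun ω => (Real.exp_pos (l * W t ω)).le) (hexpint t) (Real.exp (l * z))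
    rw [← hset] at h1
    have h2 : Real.exp (l * z) * (μ {ω | z ≤ W t ω}).toReal
        ≤ Real.exp (t * ((l * c) ^ 2 / 2)) := h1.trans (hE t)
    have ht0 : (0:ℝ) < t := by exact_mod_cast ht
    have harith : Real.exp (t * ((l * c) ^ 2 / 2)) / Real.exp (l * z)
        = Real.exp (-z ^ 2 / (2 * t * c ^ 2)) := by
      rw [← Real.exp_sub]
      congr 1
      rw [hl]
      field_simp
      ring
    have h3 : (μ {ω | z ≤ W t ω}).toReal
        ≤ Real.exp (t * ((l * c) ^ 2 / 2)) / Real.exp (l * z) := by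
      rw [le_div_iff₀ (Real.exp_pos _), mul_comm]
      exact h2
    exact h3.trans harith.le
  -- set inclusion
  have hsub : {ω | z ≤ Z t ω} ⊆
      {ω | z ≤ W t ω} ∪ ⋃ j ∈ Finset.range t, {ω | 0 < Y j ω} := by
    intro ω hω
    by_cases hbad : ∃ j ∈ Finset.range t, 0 < Y j ω
    · right
      obtain ⟨j, hj, hjY⟩ := hbad
      exact Set.mem_biUnion hj hjY
    · left
      push_neg at hbad
      have hωG : ∀ n < t, ω ∈ G n := by
        intro n hn j hj
        exact hbad j (Finset.mem_range.mpr (lt_of_le_of_lt hj hn))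
      have hWeq : W t ω = Z t ω := by
        show ∑ j ∈ Finset.range t, D j ω = Z t ω
        have : ∀ n ∈ Finset.range t, D n ω = Z (n + 1) ω - Z n ω := by
          intro n hn
          rw [hD]
          exact Set.indicator_of_mem (hωG n (Finset.mem_range.mp hn)) _
        rw [Finset.sum_congr rfl this, Finset.sum_range_sub (fun n => Z n ω), hZ0 ω, sub_zero]
      rw [Set.mem_setOf_eq, hWeq]
      exact hω
  -- combine
  have hmeasle : μ {ω | z ≤ Z t ω} ≤
      μ {ω | z ≤ W t ω} + ∑ j ∈ Finset.range t, μ {ω | 0 < Y j ω} := by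
    calc μ {ω | z ≤ Z t ω}
        ≤ μ ({ω | z ≤ W t ω} ∪ ⋃ j ∈ Finset.range t, {ω | 0 < Y j ω}) := measure_mono hsub
      _ ≤ μ {ω | z ≤ W t ω} + μ (⋃ j ∈ Finset.range t, {ω | 0 < Y j ω}) := measure_union_le _ _
      _ ≤ _ := by
          gcongr
          exact measure_biUnion_finset_le _ _
  have hsum_ne : ∑ j ∈ Finset.range t, μ {ω | 0 < Y j ω} ≠ ⊤ :=
    (ENNReal.sum_lt_top.mpr fun j _ => measure_lt_top μ _).ne
  have htR := ENNReal.toReal_mono (by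
      exact ENNReal.add_ne_top.mpr ⟨measure_ne_top μ _, hsum_ne⟩) hmeasle
  rw [ENNReal.toReal_add (measure_ne_top μ _) hsum_ne, ENNReal.toReal_sum
    (fun j _ => measure_ne_top μ _)] at htR
  exact htR.trans (add_le_add_left hmarkov _)
end

section
/- (Closed-form minimizer for the single-constraint subproblem.) Let a, c ∈ ℝ^n and b ∈ ℝ, and define φ(x) = (1/2)[aᵀx + b]_+^2 + (1/2)‖x‖^2 + cᵀx. Then the unique global minimizer of φ over ℝ^n is x̃ = −c if −aᵀc + b ≤ 0, and x̃ = −(b a + c) + (aᵀ(b a + c)/(1 + aᵀa)) a otherwise. -/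
theorem stmt_18 (n : ℕ) (a c : EuclideanSpace ℝ (Fin n)) (b : ℝ)
    (φ : EuclideanSpace ℝ (Fin n) → ℝ)
    (hφ : ∀ x, φ x = 1 / 2 * (max ((inner ℝ a x : ℝ) + b) 0)^2 + 1 / 2 * ‖x‖^2 +
      (inner ℝ c x : ℝ))
    (xt : EuclideanSpace ℝ (Fin n))
    (hxt : xt = if -(inner ℝ a c : ℝ) + b ≤ 0 then -c
      else -(b • a + c) + (((inner ℝ a (b • a + c) : ℝ)) / (1 + (inner ℝ a a : ℝ))) • a) :
    (∀ x, φ xt ≤ φ x) ∧ (∀ x, (∀ y, φ x ≤ φ y) → x = xt) := by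
  have hA : (0:ℝ) ≤ (inner ℝ a a : ℝ) := real_inner_self_nonneg
  set t : ℝ := (inner ℝ a xt : ℝ) + b with ht
  have hgrad : (max t 0) • a + xt + c = 0 := by
    by_cases hc : -(inner ℝ a c : ℝ) + b ≤ 0
    · rw [hxt, if_pos hc] at ht ⊢
      have htv : t = -(inner ℝ a c : ℝ) + b := by rw [ht, inner_neg_right]
      have hmax : max t 0 = 0 := max_eq_right (htv ▸ hc)
      rw [hmax, zero_smul, zero_add, neg_add_cancel]
    · push_neg at hc
      rw [hxt, if_neg (not_le.mpr hc)] at ht ⊢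
      set A := (inner ℝ a a : ℝ) with hAdef
      set m := (inner ℝ a (b • a + c) : ℝ) with hmdef
      set lam := m / (1 + A) with hlamdef
      have h1A : (0:ℝ) < 1 + A := by linarith
      have hm : m = b * A + (inner ℝ a c : ℝ) := by
        rw [hmdef, inner_add_right, real_inner_smul_right]
      have ht2 : t = -m + lam * A + b := by
        rw [ht, inner_add_right, inner_neg_right, real_inner_smul_right]
      have hlam : lam * (1 + A) = m := by
        rw [hlamdef]; field_simp
      have htpos : 0 < t := by
        have hq : t * (1 + A) = -(inner ℝ a c : ℝ) + b := by
          linear_combination (1 + A) * ht2 + A * hlam - hm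
        nlinarith [hq, hc, h1A]
      have hmax : max t 0 = t := max_eq_left htpos.le
      have hscal : t - b + lam = 0 := by
        rw [ht2]; linear_combination hlam
      have hv : t • a + (-(b • a + c) + lam • a) + c = (t - b + lam) • a := by
        module
      rw [hmax, hv, hscal, zero_smul]
  have key : ∀ x, φ xt + 1 / 2 * ‖x - xt‖^2 ≤ φ x := by
    intro x
    have hnorm : ‖x‖^2 = ‖xt‖^2 + 2 * (inner ℝ xt (x - xt) : ℝ) + ‖x - xt‖^2 := by
      have h := norm_add_sq_real xt (x - xt)
      rwa [add_sub_cancel] at h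
    have hs : (inner ℝ a x : ℝ) + b = t + (inner ℝ a (x - xt) : ℝ) := by
      rw [ht, inner_sub_right]; ring
    have hconv : (max t 0)^2 + 2 * (max t 0) * (inner ℝ a (x - xt) : ℝ)
        ≤ (max ((inner ℝ a x : ℝ) + b) 0)^2 := by
      set s := (inner ℝ a x : ℝ) + b with hsdef
      rcases le_or_gt t 0 with h1 | h1
      · rw [max_eq_right h1]
        have : (0:ℝ) ≤ (max s 0)^2 := sq_nonneg _
        nlinarith
      · rw [max_eq_left h1.le]
        rcases le_or_gt s 0 with h2 | h2
        · rw [max_eq_right h2]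
          nlinarith [hs, h1, h2, mul_pos h1 h1, mul_nonneg h1.le (neg_nonneg.mpr h2)]
        · rw [max_eq_left h2.le]
          nlinarith [hs, sq_nonneg (s - t)]
    have hz : (max t 0) * (inner ℝ a (x - xt) : ℝ) + (inner ℝ xt (x - xt) : ℝ)
        + (inner ℝ c (x - xt) : ℝ) = 0 := by
      have h := congrArg (fun v => (inner ℝ v (x - xt) : ℝ)) hgrad
      simp only [inner_add_left, real_inner_smul_left, inner_zero_left] at h
      linarith
    have hcx : (inner ℝ c x : ℝ) = (inner ℝ c xt : ℝ) + (inner ℝ c (x - xt) : ℝ) := by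
      rw [inner_sub_right]; ring
    rw [hφ x, hφ xt]
    linarith [hconv, hnorm, hz, hcx]
  constructor
  · intro x
    have h := key x
    nlinarith [sq_nonneg ‖x - xt‖]
  · intro x hx
    have h1 := hx xt
    have h2 := key x
    have h3 : ‖x - xt‖^2 ≤ 0 := by linarith
    have h4 : ‖x - xt‖ = 0 := by nlinarith [norm_nonneg (x - xt)]
    exact sub_eq_zero.mp (norm_eq_zero.mp h4)
end
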